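/- Let w₁, …, w_k be distinct points on the unit circle, n₁, …, n_k ≥ 1, and let ψ(z) = (z − w₁)^{n₁}(z − w₂)^{n₂} ⋯ (z − w_k)^{n_k}. Let φ ∈ Aut(𝔻) with analytic extension φ̂ to the closed unit disc. Then the composition operator C_φ (f ↦ f ∘ φ) is a well-defined algebra automorphism of ψH^∞ if and only if for every j ∈ {1, …, k} there exists i ∈ {1, …, k} with φ̂(w_j) = w_i and n_i = n_j (i.e., mult_ψ(φ̂(w_j)) = mult_ψ(w_j) for 1 ≤ j ≤ k). -/

import Mathlib

open Complex Metric Set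

local notation "𝔻" => Complex.UnitDisc

/-- The closed unit disc, as a subset of `ℂ`. -/
def cD : Set ℂ := Metric.closedBall 0 1

/-- A function on the open unit disc is analytic (holomorphic):
it is the restriction of a function differentiable on the open unit ball. -/
def HolOn (f : 𝔻 → ℂ) : Prop :=
  ∃ F : ℂ → ℂ, DifferentiableOn ℂ F (Metric.ball 0 1) ∧ ∀ z : 𝔻, F ↑z = f z

/-- Membership in `H^∞`, the algebra of bounded analytic functions on the unit disc. -/
def MemHinf (f : 𝔻 → ℂ) : Prop :=
  HolOn f ∧ ∃ M : ℝ, ∀ z : 𝔻, ‖f z‖ ≤ M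

/-- Membership in the disc algebra `A(𝔻)`: continuous on the closed unit disc,
analytic in its interior. -/
def MemDiscAlg (f : ↥cD → ℂ) : Prop :=
  ∃ F : ℂ → ℂ, ContinuousOn F cD ∧ DifferentiableOn ℂ F (Metric.ball 0 1) ∧
    ∀ z : ↥cD, F ↑z = f z

/-- `φ ∈ Aut(𝔻)`: a bijective analytic self-map of the unit disc. -/
def IsDiscAut (φ : 𝔻 → 𝔻) : Prop :=
  (∃ F : ℂ → ℂ, DifferentiableOn ℂ F (Metric.ball 0 1) ∧ ∀ z : 𝔻, F ↑z = ↑(φ z)) ∧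
  Function.Bijective φ

/-- A Möbius automorphism of the unit disc, given by its global formula
`Φ z = η (a - z) / (1 - conj a * z)` with `|a| < 1`, `|η| = 1`; this is the analytic
extension to (a neighbourhood of) the closed unit disc of a disc automorphism. -/
def IsMobius (Φ : ℂ → ℂ) : Prop :=
  ∃ a η : ℂ, ‖a‖ < 1 ∧ ‖η‖ = 1 ∧
    ∀ z : ℂ, Φ z = η * (a - z) / (1 - (starRingEnd ℂ) a * z)

/-- `T` is an algebra automorphism of the set `A` of complex-valued functions:
a bijective, `ℂ`-linear and multiplicative self-map of `A`. -/
def IsAlgAutOn {ι : Type} (A : Set (ι → ℂ)) (T : (ι → ℂ) → (ι → ℂ)) : Prop :=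
  (∀ f ∈ A, T f ∈ A) ∧
  (∀ f ∈ A, ∀ g ∈ A, T (f + g) = T f + T g) ∧
  (∀ (c : ℂ), ∀ f ∈ A, T (c • f) = c • T f) ∧
  (∀ f ∈ A, ∀ g ∈ A, T (f * g) = T f * T g) ∧
  Set.InjOn T A ∧ Set.SurjOn T A A

/-- The subalgebra `ψ H^∞ = {ψ · g : g ∈ H^∞}`. -/
def psiH (ψ : 𝔻 → ℂ) : Set (𝔻 → ℂ) :=
  {f | ∃ g, MemHinf g ∧ f = fun z => ψ z * g z}

/-- The subalgebra `ψ A(𝔻) = {ψ · g : g ∈ A(𝔻)}`. -/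
def psiA (ψ : ↥cD → ℂ) : Set (↥cD → ℂ) :=
  {f | ∃ g, MemDiscAlg g ∧ f = fun z => ψ z * g z}

/-- The composition operator `C_φ : f ↦ f ∘ φ` is a well-defined algebra automorphism
of the set `A` (it is automatically linear and multiplicative). -/
def CompAutOn (A : Set (𝔻 → ℂ)) (φ : 𝔻 → 𝔻) : Prop :=
  (∀ f ∈ A, f ∘ φ ∈ A) ∧ Set.InjOn (fun f => f ∘ φ) A ∧ Set.SurjOn (fun f => f ∘ φ) A A

/-- The Möbius factor `τ_a(z) = (a - z)/(1 - conj a · z)`. -/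
noncomputable def mobius (a z : ℂ) : ℂ := (a - z) / (1 - (starRingEnd ℂ) a * z)

/-- `f` has a zero of order (multiplicity) `k` at `w`:
`f z = (z - w)^k g z` with `g` analytic and `g w ≠ 0`. -/
def ZeroOrderAt (f : 𝔻 → ℂ) (w : 𝔻) (k : ℕ) : Prop :=
  ∃ g : 𝔻 → ℂ, HolOn g ∧ g w ≠ 0 ∧ ∀ z : 𝔻, f z = ((z : ℂ) - (w : ℂ)) ^ k * g z

/-- `g` is an invertible element of `H^∞`. -/
def InvHinf (g : 𝔻 → ℂ) : Prop :=
  MemHinf g ∧ ∃ h : 𝔻 → ℂ, MemHinf h ∧ ∀ z, g z * h z = 1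

/-- `g` is an invertible element of the disc algebra `A(𝔻)`. -/
def InvDiscAlg (g : ↥cD → ℂ) : Prop :=
  MemDiscAlg g ∧ ∃ h : ↥cD → ℂ, MemDiscAlg h ∧ ∀ z, g z * h z = 1

/-!
Write `Φ = η τ_a` and `P = ∏ (X - w_j)^{n_j}`, so that `ψ = P` on the disc. Clearing the
denominators of `P ∘ Φ` gives `P(Φ z) (1 - ā z)^N = c Q(z)` with `c ≠ 0`, where `Q` has the zeros
`Φ⁻¹(w_j)` with the multiplicities `n_j`. If `C_φ` maps `ψ H^∞` into itself, then
`(ψ ∘ φ) / ψ` is bounded, so `|Q| ≤ K |P|` on the disc; letting `z → w_j` radially shows that `Q`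
vanishes at `w_j` to order at least `n_j`, and as `P` and `Q` have the same degree, `Q = P`, which
is the condition on the multiplicities. Conversely, if `Q = P` then `ψ ∘ φ = ψ u` with
`u = c / (1 - ā z)^N` invertible in `H^∞`, and `C_φ` is an automorphism with inverse `C_{φ⁻¹}`.
-/

open ComplexConjugate Polynomial Filter Topology

section Mobius

variable {a η z v : ℂ}

theorem one_sub_conj_mul_ne_zero (ha : ‖a‖ < 1) (hz : ‖z‖ ≤ 1) : 1 - conj a * z ≠ 0 := by
  refine sub_ne_zero.2 fun h => ?_
  have : ‖conj a * z‖ < 1 := by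
    rw [norm_mul, Complex.norm_conj]
    nlinarith [norm_nonneg a, norm_nonneg z]
  rw [← h, norm_one] at this
  exact lt_irrefl _ this

theorem norm_one_sub_conj_mul_le (ha : ‖a‖ < 1) (hz : ‖z‖ ≤ 1) : ‖1 - conj a * z‖ ≤ 2 := by
  calc ‖1 - conj a * z‖ ≤ 1 + ‖a‖ * ‖z‖ := by
        simpa [norm_mul] using norm_sub_le (1 : ℂ) (conj a * z)
    _ ≤ 2 := by nlinarith [norm_nonneg a, norm_nonneg z]

theorem one_sub_norm_le_norm_one_sub_conj_mul (hz : ‖z‖ ≤ 1) : 1 - ‖a‖ ≤ ‖1 - conj a * z‖ := by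
  have := norm_sub_norm_le (1 : ℂ) (conj a * z)
  rw [norm_one, norm_mul, Complex.norm_conj] at this
  nlinarith [norm_nonneg a]

theorem normSq_one_sub_conj_mul_sub_normSq_sub (a z : ℂ) :
    Complex.normSq (1 - conj a * z) - Complex.normSq (a - z)
      = (1 - Complex.normSq a) * (1 - Complex.normSq z) := by
  simp only [Complex.normSq_apply, Complex.sub_re, Complex.sub_im, Complex.mul_re,
    Complex.mul_im, Complex.one_re, Complex.one_im, Complex.conj_re, Complex.conj_im]
  ring

theorem norm_mobius_lt (ha : ‖a‖ < 1) (hz : ‖z‖ < 1) : ‖mobius a z‖ < 1 := by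
  have hd := one_sub_conj_mul_ne_zero ha hz.le
  rw [mobius, norm_div, div_lt_one (norm_pos_iff.2 hd), ← sq_lt_sq₀ (norm_nonneg _) (norm_nonneg _),
    ← Complex.normSq_eq_norm_sq, ← Complex.normSq_eq_norm_sq, ← sub_pos,
    normSq_one_sub_conj_mul_sub_normSq_sub, Complex.normSq_eq_norm_sq, Complex.normSq_eq_norm_sq]
  apply mul_pos <;> nlinarith [norm_nonneg a, norm_nonneg z]

theorem norm_mobius_le (ha : ‖a‖ < 1) (hz : ‖z‖ ≤ 1) : ‖mobius a z‖ ≤ 1 := by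
  have hd := one_sub_conj_mul_ne_zero ha hz
  rw [mobius, norm_div, div_le_one (norm_pos_iff.2 hd), ← sq_le_sq₀ (norm_nonneg _) (norm_nonneg _),
    ← Complex.normSq_eq_norm_sq, ← Complex.normSq_eq_norm_sq, ← sub_nonneg,
    normSq_one_sub_conj_mul_sub_normSq_sub, Complex.normSq_eq_norm_sq, Complex.normSq_eq_norm_sq]
  apply mul_nonneg <;> nlinarith [norm_nonneg a, norm_nonneg z]

theorem mobius_mobius (ha : ‖a‖ < 1) (hz : 1 - conj a * z ≠ 0) : mobius a (mobius a z) = z := by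
  have ha' : 1 - conj a * a ≠ 0 := one_sub_conj_mul_ne_zero ha ha.le
  have hden : 1 - conj a * mobius a z = (1 - conj a * a) / (1 - conj a * z) := by
    rw [mobius, eq_div_iff hz, sub_mul, mul_assoc, div_mul_cancel₀ _ hz]; ring
  rw [mobius, hden, div_eq_iff (div_ne_zero ha' hz), mobius, mul_div_assoc', eq_div_iff hz, sub_mul,
    div_mul_cancel₀ _ hz]
  ring

theorem mobius_sub_mobius_mul (hz : 1 - conj a * z ≠ 0) (hv : 1 - conj a * v ≠ 0) :
    (mobius a z - mobius a v) * (1 - conj a * z)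
      = (conj a * a - 1) / (1 - conj a * v) * (z - v) := by
  rw [mobius, mobius, div_sub_div _ _ hz hv, div_mul_eq_mul_div, div_mul_eq_mul_div,
    div_eq_div_iff (mul_ne_zero hz hv) hv]
  ring

theorem differentiableAt_mobius (ha : ‖a‖ < 1) (hz : ‖z‖ ≤ 1) : DifferentiableAt ℂ (mobius a) z :=
  show DifferentiableAt ℂ (fun z => (a - z) / (1 - conj a * z)) z from
    .div (by fun_prop) (by fun_prop) (one_sub_conj_mul_ne_zero ha hz)

theorem mul_mobius_mobius_conj_mul (ha : ‖a‖ < 1) (hη : ‖η‖ = 1) (hz : ‖z‖ ≤ 1) :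
    η * mobius a (mobius a (conj η * z)) = z := by
  rw [mobius_mobius ha (one_sub_conj_mul_ne_zero ha (by simpa [hη] using hz)), ← mul_assoc,
    Complex.mul_conj', hη]
  simp

theorem mobius_conj_mul_mul_mobius (ha : ‖a‖ < 1) (hη : ‖η‖ = 1) (hz : ‖z‖ ≤ 1) :
    mobius a (conj η * (η * mobius a z)) = z := by
  rw [← mul_assoc, Complex.conj_mul', hη]
  simpa using mobius_mobius ha (one_sub_conj_mul_ne_zero ha hz)

end Mobius

theorem self_mem_psiH (ψ : 𝔻 → ℂ) : ψ ∈ psiH ψ :=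
  ⟨fun _ => 1, ⟨⟨fun _ => 1, differentiableOn_const 1, fun _ => rfl⟩, 1, fun _ => by simp⟩, by simp⟩

theorem MemHinf.mul {f g : 𝔻 → ℂ} (hf : MemHinf f) (hg : MemHinf g) :
    MemHinf fun z => f z * g z := by
  obtain ⟨⟨F, hF, hFf⟩, M, hM⟩ := hf
  obtain ⟨⟨G, hG, hGg⟩, L, hL⟩ := hg
  refine ⟨⟨fun z => F z * G z, hF.mul hG, fun z => by simp [hFf, hGg]⟩, M * L, fun z => ?_⟩
  rw [norm_mul]
  exact mul_le_mul (hM z) (hL z) (norm_nonneg _) ((norm_nonneg _).trans (hM z))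

theorem MemHinf.comp {g : 𝔻 → ℂ} (hg : MemHinf g) {φ : 𝔻 → 𝔻} (hφ : HolOn fun z => (φ z : ℂ)) :
    MemHinf (g ∘ φ) := by
  obtain ⟨⟨G, hG, hGg⟩, M, hM⟩ := hg
  obtain ⟨F, hF, hFφ⟩ := hφ
  have hmaps : MapsTo F (ball 0 1) (ball 0 1) := fun z hz => by
    have hz' : ‖z‖ < 1 := by simpa using hz
    have := hFφ (Complex.UnitDisc.mk z hz')
    rw [Complex.UnitDisc.coe_mk] at this
    simpa [this] using (φ (Complex.UnitDisc.mk z hz')).norm_lt_one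
  exact ⟨⟨G ∘ F, hG.comp hF hmaps, fun z => by simp [hFφ, hGg]⟩, M, fun z => hM (φ z)⟩

theorem comp_mem_psiH {ψ u : 𝔻 → ℂ} {φ : 𝔻 → 𝔻} (hφ : HolOn fun z => (φ z : ℂ))
    (hu : MemHinf u) (hψ : ∀ z, ψ (φ z) = ψ z * u z) {f : 𝔻 → ℂ} (hf : f ∈ psiH ψ) :
    f ∘ φ ∈ psiH ψ := by
  obtain ⟨g, hg, rfl⟩ := hf
  exact ⟨_, hu.mul (hg.comp hφ), funext fun z => by simp [hψ, mul_assoc]⟩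

theorem compAutOn_psiH {ψ u : 𝔻 → ℂ} {φ φ' : 𝔻 → 𝔻} (hφ : HolOn fun z => (φ z : ℂ))
    (hφ' : HolOn fun z => (φ' z : ℂ)) (hleft : ∀ z, φ (φ' z) = z) (hright : ∀ z, φ' (φ z) = z)
    (hu : InvHinf u) (hψ : ∀ z, ψ (φ z) = ψ z * u z) : CompAutOn (psiH ψ) φ := by
  obtain ⟨hu, u', hu', huu'⟩ := hu
  have hψ' : ∀ z, ψ (φ' z) = ψ z * u' (φ' z) := fun z => by
    rw [← hleft z, hψ, hright, mul_assoc, huu', mul_one]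
  refine ⟨fun f hf => comp_mem_psiH hφ hu hψ hf, fun f _ g _ hfg => funext fun z => ?_,
    fun f hf => ⟨f ∘ φ', comp_mem_psiH hφ' (hu'.comp hφ') hψ' hf,
      funext fun z => by simp [hright]⟩⟩
  simpa [hleft] using congrFun hfg (φ' z)

section PolyWithRoots

variable {K : Type*} [Field K] {ι : Type*} [Fintype ι]

noncomputable def polyWithRoots (w : ι → K) (n : ι → ℕ) : K[X] := ∏ i, (X - C (w i)) ^ n i

theorem monic_polyWithRoots (w : ι → K) (n : ι → ℕ) : (polyWithRoots w n).Monic :=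
  monic_prod_of_monic _ _ fun _ _ => (monic_X_sub_C _).pow _

theorem polyWithRoots_ne_zero (w : ι → K) (n : ι → ℕ) : polyWithRoots w n ≠ 0 :=
  Finset.prod_ne_zero_iff.2 fun _ _ => pow_ne_zero _ (X_sub_C_ne_zero _)

theorem roots_polyWithRoots (w : ι → K) (n : ι → ℕ) :
    (polyWithRoots w n).roots = ∑ i, n i • {w i} := by
  rw [polyWithRoots, roots_prod _ _ (polyWithRoots_ne_zero w n), Multiset.bind, Multiset.join,
    Finset.sum_eq_multiset_sum]
  simp

theorem eval_polyWithRoots (w : ι → K) (n : ι → ℕ) (z : K) :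
    (polyWithRoots w n).eval z = ∏ i, (z - w i) ^ n i := by
  simp [polyWithRoots, eval_prod]

theorem count_roots_polyWithRoots [DecidableEq K] (w : ι → K) (n : ι → ℕ) (x : K) :
    (polyWithRoots w n).roots.count x = ∑ i, if x = w i then n i else 0 := by
  simp [roots_polyWithRoots, Multiset.count_sum', Multiset.count_singleton]

theorem rootMultiplicity_polyWithRoots {w : ι → K} (hw : Function.Injective w) (n : ι → ℕ)
    (j : ι) : (polyWithRoots w n).rootMultiplicity (w j) = n j := by
  classical
  simp [← count_roots, count_roots_polyWithRoots, hw.eq_iff]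

theorem card_roots_polyWithRoots (w : ι → K) (n : ι → ℕ) :
    Multiset.card (polyWithRoots w n).roots = ∑ i, n i := by
  simp [roots_polyWithRoots]

theorem polyWithRoots_eq_of_le [IsAlgClosed K] {w : ι → K} (hw : Function.Injective w)
    (v : ι → K) (n : ι → ℕ) (h : ∀ j, n j ≤ (polyWithRoots v n).rootMultiplicity (w j)) :
    polyWithRoots v n = polyWithRoots w n := by
  classical
  have hle : (polyWithRoots w n).roots ≤ (polyWithRoots v n).roots := by
    refine Multiset.le_iff_count.2 fun x => ?_
    by_cases hx : ∃ j, w j = x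
    · obtain ⟨j, rfl⟩ := hx
      simpa [count_roots, rootMultiplicity_polyWithRoots hw] using h j
    · rw [count_roots_polyWithRoots]
      simp [fun j => Ne.symm (not_exists.1 hx j)]
  have hroots := Multiset.eq_of_le_of_card_le hle (by simp only [card_roots_polyWithRoots, le_rfl])
  rw [← prod_multiset_X_sub_C_of_monic_of_roots_card_eq (monic_polyWithRoots v n)
      IsAlgClosed.card_roots_eq_natDegree,
    ← prod_multiset_X_sub_C_of_monic_of_roots_card_eq (monic_polyWithRoots w n)
      IsAlgClosed.card_roots_eq_natDegree, hroots]

theorem exists_eq_and_eq_iff_polyWithRoots_eq [IsAlgClosed K] {w : ι → K}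
    (hw : Function.Injective w) {n : ι → ℕ} (hn : ∀ j, 1 ≤ n j) {Φ Ψ : K → K}
    (hΨΦ : ∀ j, Ψ (Φ (w j)) = w j) (hΦΨ : ∀ j, Φ (Ψ (w j)) = w j) :
    (∀ j, ∃ i, Φ (w j) = w i ∧ n i = n j) ↔ polyWithRoots (Ψ ∘ w) n = polyWithRoots w n := by
  have hv : Function.Injective (Ψ ∘ w) := fun i j h => hw <| by
    rw [← hΦΨ i, ← hΦΨ j]; exact congrArg Φ h
  constructor
  · refine fun h => polyWithRoots_eq_of_le hw _ n fun j => ?_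
    obtain ⟨i, hi, hni⟩ := h j
    have : (Ψ ∘ w) i = w j := by simp [← hi, hΨΦ]
    rw [← this, rootMultiplicity_polyWithRoots hv, hni]
  · intro hQP j
    have hroot : (polyWithRoots (Ψ ∘ w) n).eval (w j) = 0 := by
      rw [hQP, eval_polyWithRoots]
      exact Finset.prod_eq_zero (Finset.mem_univ j) <| by
        rw [sub_self, zero_pow (Nat.one_le_iff_ne_zero.1 (hn j))]
    rw [eval_polyWithRoots] at hroot
    obtain ⟨i, -, hi⟩ := Finset.prod_eq_zero_iff.1 hroot
    have hwi : w j = Ψ (w i) := sub_eq_zero.1 (pow_eq_zero_iff'.1 hi).1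
    refine ⟨i, by rw [hwi, hΦΨ], ?_⟩
    have := rootMultiplicity_polyWithRoots hv n i
    rw [hQP, Function.comp_apply, ← hwi, rootMultiplicity_polyWithRoots hw] at this
    exact this.symm

end PolyWithRoots

theorem rootMultiplicity_le_of_eventually_norm_eval_le {𝕜 : Type*} [NormedField 𝕜]
    {p q : 𝕜[X]} (hq : q ≠ 0) {x : 𝕜} {l : Filter 𝕜} [l.NeBot] (hl : l ≤ 𝓝[≠] x) {K : ℝ}
    (h : ∀ᶠ z in l, ‖q.eval z‖ ≤ K * ‖p.eval z‖) :
    p.rootMultiplicity x ≤ q.rootMultiplicity x := by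
  by_contra! hlt
  obtain ⟨q', hq', hq'x⟩ := exists_eq_pow_rootMultiplicity_mul_and_not_dvd q hq x
  obtain ⟨p', hp'⟩ := pow_rootMultiplicity_dvd p x
  obtain ⟨d, hd⟩ := Nat.exists_eq_add_of_lt hlt
  rw [dvd_iff_isRoot] at hq'x
  have hbound : ∀ᶠ z in l, ‖q'.eval z‖ ≤ K * ‖z - x‖ ^ (d + 1) * ‖p'.eval z‖ := by
    filter_upwards [h, hl self_mem_nhdsWithin] with z hz hzx
    have hpos : 0 < ‖z - x‖ ^ q.rootMultiplicity x := pow_pos (norm_pos_iff.2 (sub_ne_zero.2 hzx)) _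
    rw [hq', hp', hd] at hz
    simp only [eval_mul, eval_pow, eval_sub, eval_X, eval_C, norm_mul, norm_pow] at hz
    refine le_of_mul_le_mul_left ?_ hpos
    calc _ ≤ _ := hz
      _ = _ := by ring
  have hl' : l ≤ 𝓝 x := hl.trans nhdsWithin_le_nhds
  have hlim : Tendsto (fun z => K * ‖z - x‖ ^ (d + 1) * ‖p'.eval z‖) l (𝓝 0) := by
    have : Tendsto (fun z => K * ‖z - x‖ ^ (d + 1) * ‖p'.eval z‖) (𝓝 x)
        (𝓝 (K * ‖x - x‖ ^ (d + 1) * ‖p'.eval x‖)) :=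
      ((continuous_const.mul ((continuous_id.sub continuous_const).norm.pow _)).mul
        p'.continuous.norm).tendsto x
    simpa using this.mono_left hl'
  have := le_of_tendsto_of_tendsto ((q'.continuous.tendsto x).norm.mono_left hl') hlim hbound
  exact hq'x (norm_le_zero_iff.1 this)

theorem rootMultiplicity_le_of_norm_eval_le {p q : ℂ[X]} (hq : q ≠ 0) {x : ℂ} (hx : ‖x‖ = 1)
    {K : ℝ} (h : ∀ z : ℂ, ‖z‖ < 1 → ‖q.eval z‖ ≤ K * ‖p.eval z‖) :
    p.rootMultiplicity x ≤ q.rootMultiplicity x := by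
  have hx0 : x ≠ 0 := norm_ne_zero_iff.1 (by simp [hx])
  have hradial : Tendsto (fun r : ℝ => (r : ℂ) * x) (𝓝[<] 1) (𝓝[≠] x) := by
    refine tendsto_nhdsWithin_of_tendsto_nhds_of_eventually_within _ ?_ ?_
    · have := (Complex.continuous_ofReal.mul continuous_const).tendsto (1 : ℝ)
        (f := fun r : ℝ => (r : ℂ) * x)
      simpa using this.mono_left nhdsWithin_le_nhds
    · filter_upwards [self_mem_nhdsWithin] with r hr
      simpa [hx0] using hr.ne
  refine rootMultiplicity_le_of_eventually_norm_eval_le (K := K) hq hradial (eventually_map.2 ?_)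
  filter_upwards [self_mem_nhdsWithin, Ioo_mem_nhdsLT zero_lt_one] with r hr hr0
  exact h _ (by simpa [norm_mul, hx, abs_of_pos hr0.1] using hr)

section DiscAutomorphism

variable {a η : ℂ} {ι : Type*} [Fintype ι]

theorem invHinf_const_div_pow (ha : ‖a‖ < 1) {c : ℂ} (hc : c ≠ 0) (N : ℕ) :
    InvHinf fun z : 𝔻 => c / (1 - conj a * z) ^ N := by
  have hD (z : 𝔻) : 1 - conj a * z ≠ 0 := one_sub_conj_mul_ne_zero ha z.norm_lt_one.le
  refine ⟨⟨⟨fun z => c / (1 - conj a * z) ^ N, fun z hz => ?_, fun _ => rfl⟩,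
    ‖c‖ / (1 - ‖a‖) ^ N, fun z => ?_⟩,
    fun z => (1 - conj a * z) ^ N / c,
    ⟨⟨fun z => (1 - conj a * z) ^ N / c, by fun_prop, fun _ => rfl⟩, 2 ^ N / ‖c‖, fun z => ?_⟩,
    fun z => by field_simp [hD z]⟩
  · have : 1 - conj a * z ≠ 0 :=
      one_sub_conj_mul_ne_zero ha (by simpa using (mem_ball_zero_iff.1 hz).le)
    fun_prop (disch := exact pow_ne_zero _ this)
  · rw [norm_div, norm_pow]
    gcongr
    exact one_sub_norm_le_norm_one_sub_conj_mul z.norm_lt_one.le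
  · rw [norm_div, norm_pow]
    gcongr
    exact norm_one_sub_conj_mul_le ha z.norm_lt_one.le

theorem exists_eval_polyWithRoots_mobius_mul_pow {w : ι → ℂ} (hw : ∀ j, ‖w j‖ ≤ 1) (n : ι → ℕ)
    (ha : ‖a‖ < 1) (hη : ‖η‖ = 1) :
    ∃ c ≠ 0, ∀ z : ℂ, ‖z‖ ≤ 1 →
      (polyWithRoots w n).eval (η * mobius a z) * (1 - conj a * z) ^ ∑ j, n j
        = c * (polyWithRoots (fun j => mobius a (conj η * w j)) n).eval z := by
  set v := fun j => mobius a (conj η * w j)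
  have hv (j : ι) : 1 - conj a * v j ≠ 0 :=
    one_sub_conj_mul_ne_zero ha (norm_mobius_le ha (by simpa [hη] using hw j))
  have hwv (j : ι) : w j = η * mobius a (v j) := (mul_mobius_mobius_conj_mul ha hη (hw j)).symm
  have hη0 : η ≠ 0 := norm_ne_zero_iff.1 (by simp [hη])
  have ha0 : conj a * a - 1 ≠ 0 := by
    rw [← neg_sub]; exact neg_ne_zero.2 (one_sub_conj_mul_ne_zero ha ha.le)
  refine ⟨∏ j, (η * ((conj a * a - 1) / (1 - conj a * v j))) ^ n j,
    Finset.prod_ne_zero_iff.2 fun j _ => pow_ne_zero _ (mul_ne_zero hη0 (div_ne_zero ha0 (hv j))),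
    fun z hz => ?_⟩
  rw [eval_polyWithRoots, eval_polyWithRoots, ← Finset.prod_pow_eq_pow_sum,
    ← Finset.prod_mul_distrib, ← Finset.prod_mul_distrib]
  refine Finset.prod_congr rfl fun j _ => ?_
  rw [← mul_pow, ← mul_pow, hwv j, ← mul_sub, mul_assoc,
    mobius_sub_mobius_mul (one_sub_conj_mul_ne_zero ha hz) (hv j), mul_assoc]

theorem polyWithRoots_eq_of_comp_mem_psiH {w : ι → ℂ} (hw : ∀ j, ‖w j‖ = 1)
    (hinj : Function.Injective w) (n : ι → ℕ) (ha : ‖a‖ < 1) (hη : ‖η‖ = 1) {φ : 𝔻 → 𝔻}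
    (hφ : ∀ z : 𝔻, (φ z : ℂ) = η * mobius a z)
    (hmem : (fun z : 𝔻 => (polyWithRoots w n).eval (z : ℂ)) ∘ φ
      ∈ psiH fun z : 𝔻 => (polyWithRoots w n).eval (z : ℂ)) :
    polyWithRoots (fun j => mobius a (conj η * w j)) n = polyWithRoots w n := by
  obtain ⟨h, ⟨-, M, hM⟩, hh⟩ := hmem
  obtain ⟨c, hc, hpull⟩ := exists_eval_polyWithRoots_mobius_mul_pow (fun j => (hw j).le) n ha hη
  set N := ∑ j, n j
  have hbound (z : ℂ) (hz : ‖z‖ < 1) :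
      ‖(polyWithRoots (fun j => mobius a (conj η * w j)) n).eval z‖
        ≤ M * 2 ^ N / ‖c‖ * ‖(polyWithRoots w n).eval z‖ := by
    have hφz := congrFun hh (Complex.UnitDisc.mk z hz)
    simp only [Function.comp_apply, hφ, Complex.UnitDisc.coe_mk] at hφz
    have hnorm := congrArg norm (hpull z hz.le)
    rw [hφz, norm_mul, norm_mul, norm_mul, norm_pow] at hnorm
    have hM0 : 0 ≤ M := (norm_nonneg _).trans (hM 0)
    rw [div_mul_eq_mul_div, le_div_iff₀ (norm_pos_iff.2 hc)]
    calc _ = ‖(polyWithRoots w n).eval z‖ * ‖h _‖ * ‖1 - conj a * z‖ ^ N := by rw [hnorm, mul_comm]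
      _ ≤ ‖(polyWithRoots w n).eval z‖ * M * 2 ^ N := by
        gcongr
        exacts [hM _, norm_one_sub_conj_mul_le ha hz.le]
      _ = _ := by ring
  refine polyWithRoots_eq_of_le hinj _ n fun j => ?_
  calc n j = (polyWithRoots w n).rootMultiplicity (w j) :=
        (rootMultiplicity_polyWithRoots hinj n j).symm
    _ ≤ _ := rootMultiplicity_le_of_norm_eval_le (polyWithRoots_ne_zero _ _) (hw j) hbound

theorem compAutOn_psiH_of_polyWithRoots_eq {w : ι → ℂ} (hw : ∀ j, ‖w j‖ ≤ 1) {n : ι → ℕ}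
    (ha : ‖a‖ < 1) (hη : ‖η‖ = 1) {φ : 𝔻 → 𝔻} (hφ : ∀ z : 𝔻, (φ z : ℂ) = η * mobius a z)
    (hQP : polyWithRoots (fun j => mobius a (conj η * w j)) n = polyWithRoots w n) :
    CompAutOn (psiH fun z : 𝔻 => (polyWithRoots w n).eval (z : ℂ)) φ := by
  obtain ⟨c, hc, hpull⟩ := exists_eval_polyWithRoots_mobius_mul_pow hw n ha hη
  have hηz (z : 𝔻) : ‖conj η * z‖ < 1 := by simpa [hη] using z.norm_lt_one
  let φ' : 𝔻 → 𝔻 := fun z => Complex.UnitDisc.mk _ (norm_mobius_lt ha (hηz z))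
  refine compAutOn_psiH (φ' := φ')
    ⟨fun z => η * mobius a z, fun z hz => ?_, fun z => (hφ z).symm⟩
    ⟨fun z => mobius a (conj η * z), fun z hz => ?_, fun _ => rfl⟩
    (fun z => Complex.UnitDisc.coe_injective ?_) (fun z => Complex.UnitDisc.coe_injective ?_)
    (invHinf_const_div_pow ha hc (∑ j, n j)) fun z => ?_
  · have hz : ‖z‖ ≤ 1 := by simpa using (mem_ball_zero_iff.1 hz).le
    exact ((differentiableAt_mobius ha hz).const_mul η).differentiableWithinAt
  · have hz : ‖conj η * z‖ ≤ 1 := by simpa [hη] using (mem_ball_zero_iff.1 hz).le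
    exact ((differentiableAt_mobius ha hz).comp z (by fun_prop)).differentiableWithinAt
  · simpa [φ', hφ] using mul_mobius_mobius_conj_mul ha hη z.norm_lt_one.le
  · simpa [φ', hφ] using mobius_conj_mul_mul_mobius ha hη z.norm_lt_one.le
  · have hD := one_sub_conj_mul_ne_zero ha z.norm_lt_one.le
    have := hpull z z.norm_lt_one.le
    rw [hQP, ← eq_div_iff (pow_ne_zero _ hD)] at this
    rw [hφ, this]
    ring

end DiscAutomorphism

theorem stmt_15_general (k : ℕ) (w : Fin k → ℂ) (hw : ∀ j, ‖w j‖ = 1)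
    (hdist : Function.Injective w) (n : Fin k → ℕ) (hn : ∀ j, 1 ≤ n j)
    (φ : 𝔻 → 𝔻) (Φ : ℂ → ℂ) (hmob : IsMobius Φ)
    (hlink : ∀ z : 𝔻, (↑(φ z) : ℂ) = Φ ↑z) :
    CompAutOn (psiH (fun z : 𝔻 => ∏ j, ((z : ℂ) - w j) ^ (n j))) φ ↔
      ∀ j, ∃ i, Φ (w j) = w i ∧ n i = n j := by
  obtain ⟨a, η, ha, hη, hΦ⟩ := hmob
  obtain rfl : Φ = fun z => η * mobius a z := funext fun z => by rw [hΦ, mobius, mul_div_assoc]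
  have hψ : (fun z : 𝔻 => ∏ j, ((z : ℂ) - w j) ^ (n j))
      = fun z : 𝔻 => (polyWithRoots w n).eval (z : ℂ) :=
    funext fun z => (eval_polyWithRoots w n z).symm
  rw [hψ, exists_eq_and_eq_iff_polyWithRoots_eq hdist hn (Φ := fun z => η * mobius a z)
    (Ψ := fun z => mobius a (conj η * z)) (fun j => mobius_conj_mul_mul_mobius ha hη (hw j).le)
    (fun j => mul_mobius_mobius_conj_mul ha hη (hw j).le)]
  exact ⟨fun h => polyWithRoots_eq_of_comp_mem_psiH hw hdist n ha hη hlink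
    (h.1 _ (self_mem_psiH _)), compAutOn_psiH_of_polyWithRoots_eq (fun j => (hw j).le) ha hη hlink⟩

/-- for `ψ(z) = (z - w₁)^{n₁} ⋯ (z - w_k)^{n_k}` with distinct unimodular
`w_j` and `φ ∈ Aut(𝔻)` with Möbius extension `Φ`, the composition operator `C_φ` is a
well-defined algebra automorphism of `ψ H^∞` iff `mult_ψ (Φ w_j) = mult_ψ (w_j)` for all
`j`, i.e. each `Φ w_j` is some `w_i` with `n_i = n_j`. -/
theorem stmt_15 (k : ℕ) (hk : 1 ≤ k) (w : Fin k → ℂ) (hw : ∀ j, ‖w j‖ = 1)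
    (hdist : Function.Injective w) (n : Fin k → ℕ) (hn : ∀ j, 1 ≤ n j)
    (φ : 𝔻 → 𝔻) (Φ : ℂ → ℂ) (hmob : IsMobius Φ)
    (hlink : ∀ z : 𝔻, (↑(φ z) : ℂ) = Φ ↑z) :
    CompAutOn (psiH (fun z : 𝔻 => ∏ j, ((z : ℂ) - w j) ^ (n j))) φ ↔
      ∀ j, ∃ i, Φ (w j) = w i ∧ n i = n j :=
  stmt_15_general k w hw hdist n hn φ Φ hmob hlink
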